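/- arXiv:2302.03761 — 3 statements merged into one kernel-verified Lean document; each statement's English description precedes it below -/
import Mathlib

section
/- Let n < r be positive integers and v₁,…,v_r ∈ ℤⁿ with v_i = e_i (the i-th standard basis vector) for 1 ≤ i ≤ n and v₁+⋯+v_r = 0. Let a = (a₁,…,a_r) ∈ ℤ^r with a_j = 0 for 1 ≤ j ≤ n, and set P(a) = {u ∈ ℝⁿ : ⟨u,v_j⟩ ≥ −a_j for all j} (a compact subset of the nonnegative orthant). For 1 ≤ i ≤ n define a⁽ⁱ⁾ ∈ ℤ^r by a⁽ⁱ⁾_j = a_j + (v_j)_i for j > n and a⁽ⁱ⁾_j = 0 for j ≤ n, where (v_j)_i is the i-th coordinate of v_j; note |a⁽ⁱ⁾| = |a| − 1. Then, as an identity in ℚ(q)[x₁,…,xₙ], (d/dx_i)_q RS_a(x;q) = [|a|]_q · RS_{a⁽ⁱ⁾}(x;q). -/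
noncomputable section
open MvPolynomial

/-- `(q;q)_d = ∏_{k=1}^d (1 - q^k)` in `ℚ(q)`. -/
def qqPoch (q : RatFunc ℚ) (d : ℕ) : RatFunc ℚ :=
  ∏ k ∈ Finset.range d, (1 - q ^ (k + 1))

/-- The substitution operator `T_{i,q} : f(x₁,…,x_i,…,xₙ) ↦ f(x₁,…,q·x_i,…,xₙ)`. -/
def Tq {n : ℕ} (i : Fin n) (f : MvPolynomial (Fin n) (RatFunc ℚ)) :
    MvPolynomial (Fin n) (RatFunc ℚ) :=
  aeval (fun j : Fin n => if j = i then C RatFunc.X * X j else X j) f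

/-- The `i`-th Jackson (partial `q`-)derivative `(d/dx_i)_q f = (f − T_{i,q} f)/((1−q)x_i)`;
the numerator `f − T_{i,q} f` is exactly divisible by the monomial `x_i`. -/
def jackson {n : ℕ} (i : Fin n) (f : MvPolynomial (Fin n) (RatFunc ℚ)) :
    MvPolynomial (Fin n) (RatFunc ℚ) :=
  C (1 - RatFunc.X : RatFunc ℚ)⁻¹ * ((f - Tq i f).divMonomial (Finsupp.single i 1))

/-- The generalized Rogers–Szegő polynomial
`RS_a(x;q) = Σ_{u ∈ P(a)∩ℤⁿ} [|a|; ⟨u,v₁⟩+a₁,…,⟨u,v_r⟩+a_r]_q x₁^{u₁}⋯xₙ^{uₙ}`,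
where `P(a) = {u ∈ ℝⁿ : ⟨u,v_i⟩ ≥ −a_i for all i}` lies in the nonnegative orthant
(so its lattice points are indexed by `u : Fin n → ℕ`); the sum is a finite sum
(`∑ᶠ`, a finitely supported sum), equal to `0` if `P(a)∩ℤⁿ = ∅`. -/
def RSgen (n r : ℕ) (v : Fin r → Fin n → ℤ) (a : Fin r → ℤ) :
    MvPolynomial (Fin n) (RatFunc ℚ) :=
  ∑ᶠ u : Fin n → ℕ,
    if ∀ i, -(a i) ≤ ∑ j, (u j : ℤ) * v i j then
      monomial (Finsupp.equivFunOnFinite.symm u)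
        (qqPoch RatFunc.X (∑ i, a i).toNat /
          ∏ i, qqPoch RatFunc.X ((∑ j, (u j : ℤ) * v i j) + a i).toNat)
    else 0

end

/-!
Compare coefficients. The Jackson derivative sends the coefficient of `x^(d + eᵢ)` to
`[dᵢ + 1]_q` times the coefficient of `x^d`. The slack vector `(⟨u, v_j⟩ + a_j)_j` of
`u = d + eᵢ` for `a` is the slack vector of `d` for `a⁽ⁱ⁾` plus the unit vector at the slot
`j = i` (where the slack is `dᵢ`), and `|a| = |a⁽ⁱ⁾| + 1`; so the claim is the identity
`[t_k + 1]_q · [N + 1; t + e_k]_q = [N + 1]_q · [N; t]_q` for `N = Σ t`.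
-/

open MvPolynomial Finset

noncomputable section

lemma one_sub_X_pow_ne_zero {k : ℕ} (hk : k ≠ 0) : (1 - RatFunc.X ^ k : RatFunc ℚ) ≠ 0 := by
  rw [sub_ne_zero, ne_comm, ← RatFunc.algebraMap_X, ← map_pow,
    ← map_one (algebraMap (Polynomial ℚ) (RatFunc ℚ))]
  intro h
  have := congrArg Polynomial.natDegree (RatFunc.algebraMap_injective ℚ h)
  simp only [Polynomial.natDegree_X_pow, Polynomial.natDegree_one] at this
  exact hk this

lemma qqPoch_succ (d : ℕ) :
    qqPoch RatFunc.X (d + 1) = qqPoch RatFunc.X d * (1 - RatFunc.X ^ (d + 1)) :=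
  prod_range_succ _ d

lemma qqPoch_ne_zero (d : ℕ) : qqPoch RatFunc.X d ≠ 0 :=
  prod_ne_zero_iff.mpr fun _ _ => one_sub_X_pow_ne_zero (Nat.succ_ne_zero _)

def qMultinomial {ι : Type*} [Fintype ι] (t : ι → ℕ) : RatFunc ℚ :=
  qqPoch RatFunc.X (∑ j, t j) / ∏ j, qqPoch RatFunc.X (t j)

lemma qMultinomial_add_single_mul {ι : Type*} [Fintype ι] [DecidableEq ι] (t : ι → ℕ) (k : ι) :
    qMultinomial (t + Pi.single k 1 : ι → ℕ) * (1 - RatFunc.X ^ (t k + 1)) =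
      (1 - RatFunc.X ^ (∑ j, t j + 1)) * qMultinomial t := by
  have hsum : ∑ j, (t + Pi.single k 1 : ι → ℕ) j = ∑ j, t j + 1 := by
    simp [sum_add_distrib]
  have hprod : ∏ j, qqPoch RatFunc.X ((t + Pi.single k 1 : ι → ℕ) j) =
      (1 - RatFunc.X ^ (t k + 1)) * ∏ j, qqPoch RatFunc.X (t j) := by
    rw [← mul_prod_erase univ _ (mem_univ k),
      ← mul_prod_erase univ (fun j => qqPoch _ (t j)) (mem_univ k),
      prod_congr rfl fun j hj => by
        rw [Pi.add_apply, Pi.single_eq_of_ne (ne_of_mem_erase hj), add_zero]]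
    simp only [Pi.add_apply, Pi.single_eq_same, qqPoch_succ]
    ring
  rw [qMultinomial, qMultinomial, hsum, hprod, qqPoch_succ]
  field_simp [prod_ne_zero_iff.mpr fun j (_ : j ∈ univ) => qqPoch_ne_zero (t j),
    one_sub_X_pow_ne_zero (Nat.succ_ne_zero (t k))]

def intQMultinomial {ι : Type*} [Fintype ι] (s : ι → ℤ) : RatFunc ℚ :=
  if ∀ j, 0 ≤ s j then qMultinomial fun j => (s j).toNat else 0

lemma one_sub_X_pow_mul_intQMultinomial_add_single {ι : Type*} [Fintype ι] [DecidableEq ι]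
    (s : ι → ℤ) {k : ι} (hk : 0 ≤ s k) :
    (1 - RatFunc.X ^ ((s k).toNat + 1)) * intQMultinomial (s + Pi.single k 1) =
      (1 - RatFunc.X ^ (∑ j, s j + 1)) * intQMultinomial s := by
  have hsingle : ∀ j, 0 ≤ (Pi.single k 1 : ι → ℤ) j :=
    (Pi.single_nonneg.mpr zero_le_one : (0 : ι → ℤ) ≤ Pi.single k 1)
  unfold intQMultinomial
  by_cases h : ∀ j, 0 ≤ s j
  · have h' : ∀ j, 0 ≤ (s + Pi.single k 1 : ι → ℤ) j := fun j => add_nonneg (h j) (hsingle j)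
    rw [if_pos h', if_pos h]
    have ht : (fun j => ((s + Pi.single k 1 : ι → ℤ) j).toNat) =
        (fun j => (s j).toNat) + Pi.single k 1 := by
      funext j
      rw [Pi.add_apply, Int.toNat_add (h j) (hsingle j)]
      by_cases hj : j = k <;> simp [hj]
    have hsum : ∑ j, s j + 1 = ((∑ j, (s j).toNat + 1 : ℕ) : ℤ) := by
      push_cast
      rw [sum_congr rfl fun j _ => Int.toNat_of_nonneg (h j)]
    rw [ht, hsum, zpow_natCast, mul_comm, qMultinomial_add_single_mul]
  · have h' : ¬ ∀ j, 0 ≤ (s + Pi.single k 1 : ι → ℤ) j := fun h' => h fun j =>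
      if hj : j = k then hj ▸ hk else by simpa [hj] using h' j
    rw [if_neg h, if_neg h', mul_zero, mul_zero]

lemma aeval_C_mul_X_monomial {σ R : Type*} [CommSemiring R] (s : σ → R) (d : σ →₀ ℕ) (c : R) :
    aeval (fun j => C (s j) * X j) (monomial d c) =
      monomial d ((d.prod fun j k => s j ^ k) * c) := by
  rw [aeval_monomial, algebraMap_eq, monomial_eq]
  simp only [mul_pow, Finsupp.prod_mul, map_finsuppProd, C_mul, C_pow]
  ring

lemma coeff_aeval_C_mul_X {σ R : Type*} [CommSemiring R] (s : σ → R) (f : MvPolynomial σ R)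
    (d : σ →₀ ℕ) :
    coeff d (aeval (fun j => C (s j) * X j) f) = (d.prod fun j k => s j ^ k) * coeff d f := by
  classical
  induction f using MvPolynomial.induction_on' with
  | monomial e c =>
    rw [aeval_C_mul_X_monomial, coeff_monomial, coeff_monomial]
    split_ifs with h
    · rw [h]
    · rw [mul_zero]
  | add f g hf hg => rw [map_add, coeff_add, coeff_add, hf, hg, mul_add]

lemma coeff_Tq {n : ℕ} (i : Fin n) (f : MvPolynomial (Fin n) (RatFunc ℚ)) (d : Fin n →₀ ℕ) :
    coeff d (Tq i f) = RatFunc.X ^ d i * coeff d f := by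
  have hTq : Tq i f = aeval (fun j => C (if j = i then RatFunc.X else 1) * X j) f := by
    unfold Tq; congr; funext j; split_ifs <;> simp
  rw [hTq, coeff_aeval_C_mul_X]
  simp only [ite_pow, one_pow, Finsupp.prod_ite_eq', Finsupp.mem_support_iff]
  split_ifs with h
  · rfl
  · rw [not_not.mp h, pow_zero]

lemma coeff_jackson {n : ℕ} (i : Fin n) (f : MvPolynomial (Fin n) (RatFunc ℚ)) (d : Fin n →₀ ℕ) :
    coeff d (jackson i f) =
      (1 - RatFunc.X)⁻¹ * (1 - RatFunc.X ^ (d i + 1)) * coeff (d + Finsupp.single i 1) f := by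
  rw [jackson, coeff_C_mul, coeff_divMonomial, coeff_sub, coeff_Tq, add_comm,
    Finsupp.add_apply, Finsupp.single_eq_same]
  ring

lemma coeff_finsum_ite_monomial {σ R : Type*} [Finite σ] [CommSemiring R]
    (p : (σ → ℕ) → Prop) [DecidablePred p] (c : (σ → ℕ) → R) (hp : {u | p u}.Finite)
    (d : σ →₀ ℕ) :
    coeff d (∑ᶠ u, if p u then monomial (Finsupp.equivFunOnFinite.symm u) (c u) else 0) =
      if p d then c d else 0 := by
  classical
  have hfin : (Function.support fun u =>
      if p u then monomial (Finsupp.equivFunOnFinite.symm u) (c u) else 0).Finite :=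
    hp.subset fun u hu => by_contra fun h => hu (if_neg h)
  rw [← coeffAddMonoidHom_apply, AddMonoidHom.map_finsum _ hfin, finsum_eq_single _ ⇑d]
  · split_ifs <;> simp
  · intro u hu
    split_ifs
    · rw [coeffAddMonoidHom_apply, coeff_monomial, if_neg]
      rintro rfl
      exact hu rfl
    · exact map_zero _

section RogersSzego

variable {n r : ℕ} {v : Fin r → Fin n → ℤ} {a : Fin r → ℤ}

/-- `u ∈ P(a)` iff all slacks `⟨u, v_j⟩ + a_j` are nonnegative. -/
def slack (v : Fin r → Fin n → ℤ) (a : Fin r → ℤ) (u : Fin n → ℕ) (j : Fin r) : ℤ :=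
  ∑ k, (u k : ℤ) * v j k + a j

/-- The parameter `a⁽ⁱ⁾`. -/
def lowerParam (v : Fin r → Fin n → ℤ) (a : Fin r → ℤ) (i : Fin n) (j : Fin r) : ℤ :=
  if (j : ℕ) < n then 0 else a j + v j i

lemma lowerParam_of_lt (i : Fin n) : ∀ j : Fin r, (j : ℕ) < n → lowerParam v a i j = 0 :=
  fun _ hj => if_pos hj

lemma sum_slack (hsym : ∀ k, ∑ j, v j k = 0) (u : Fin n → ℕ) :
    ∑ j, slack v a u j = ∑ j, a j := by
  simp only [slack, sum_add_distrib, add_eq_right]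
  rw [sum_comm]
  exact sum_eq_zero fun k _ => by rw [← mul_sum, hsym, mul_zero]

lemma slack_add_single (u : Fin n → ℕ) (i : Fin n) (j : Fin r) :
    slack v a (u + Pi.single i 1) j = slack v a u j + v j i := by
  simp only [slack, Pi.add_apply, Nat.cast_add, add_mul, sum_add_distrib, Pi.single_apply,
    Nat.cast_ite, Nat.cast_one, Nat.cast_zero, ite_mul, one_mul, zero_mul, sum_ite_eq', mem_univ,
    if_true]
  ring

variable (hv : ∀ i : Fin r, (i : ℕ) < n → ∀ j : Fin n, v i j = if (j : ℕ) = (i : ℕ) then 1 else 0)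
  (ha : ∀ i : Fin r, (i : ℕ) < n → a i = 0)
include hv ha

lemma slack_castLE (hnr : n < r) (u : Fin n → ℕ) (k : Fin n) :
    slack v a u (Fin.castLE hnr.le k) = u k := by
  simp [slack, hv (Fin.castLE hnr.le k) k.2, ha (Fin.castLE hnr.le k) k.2, Fin.val_inj]

lemma add_eq_lowerParam_add_single (hnr : n < r) (i : Fin n) (j : Fin r) :
    a j + v j i = lowerParam v a i j + (Pi.single (Fin.castLE hnr.le i) 1 : Fin r → ℤ) j := by
  by_cases hj : (j : ℕ) < n
  · simp [lowerParam, hj, ha j hj, hv j hj, Pi.single_apply, Fin.ext_iff, eq_comm]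
  · have : j ≠ Fin.castLE hnr.le i := fun h => hj (h ▸ i.2)
    simp [lowerParam, hj, this]

lemma slack_add_single_eq_slack_lowerParam (hnr : n < r) (u : Fin n → ℕ) (i : Fin n) :
    slack v a (u + Pi.single i 1) =
      slack v (lowerParam v a i) u + Pi.single (Fin.castLE hnr.le i) 1 := by
  funext j
  rw [Pi.add_apply, slack_add_single, slack, slack, add_assoc,
    add_eq_lowerParam_add_single hv ha hnr, add_assoc]

lemma sum_eq_sum_lowerParam_add_one (hnr : n < r) (hsym : ∀ k, ∑ j, v j k = 0) (i : Fin n) :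
    ∑ j, a j = ∑ j, lowerParam v a i j + 1 := by
  simpa [sum_add_distrib, hsym] using
    sum_congr rfl fun j (_ : j ∈ univ) => add_eq_lowerParam_add_single hv ha hnr i j

lemma coe_le_sum_of_slack_nonneg (hnr : n < r) (hsym : ∀ k, ∑ j, v j k = 0)
    {u : Fin n → ℕ} (hu : ∀ j, 0 ≤ slack v a u j) (k : Fin n) :
    (u k : ℤ) ≤ ∑ j, a j :=
  calc (u k : ℤ) = slack v a u (Fin.castLE hnr.le k) := (slack_castLE hv ha hnr u k).symm
    _ ≤ ∑ j, slack v a u j := single_le_sum (fun j _ => hu j) (mem_univ _)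
    _ = ∑ j, a j := sum_slack hsym u

lemma finite_setOf_slack_nonneg (hnr : n < r) (hsym : ∀ k, ∑ j, v j k = 0) :
    {u : Fin n → ℕ | ∀ j, 0 ≤ slack v a u j}.Finite :=
  (Set.finite_Icc 0 fun _ => (∑ j, a j).toNat).subset fun u hu =>
    ⟨fun _ => Nat.zero_le _, fun k => by
      have := coe_le_sum_of_slack_nonneg hv ha hnr hsym hu k
      change u k ≤ (∑ j, a j).toNat
      omega⟩

lemma coeff_RSgen (hnr : n < r) (hsym : ∀ k, ∑ j, v j k = 0) (d : Fin n →₀ ℕ) :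
    coeff d (RSgen n r v a) = intQMultinomial (slack v a d) := by
  have hRS : RSgen n r v a = ∑ᶠ u, if ∀ j, 0 ≤ slack v a u j then
      monomial (Finsupp.equivFunOnFinite.symm u)
        (qqPoch RatFunc.X (∑ j, a j).toNat / ∏ j, qqPoch RatFunc.X (slack v a u j).toNat)
      else 0 := by
    simp only [RSgen, slack, neg_le_iff_add_nonneg]
    rfl
  rw [hRS, coeff_finsum_ite_monomial _ _ (finite_setOf_slack_nonneg hv ha hnr hsym),
    intQMultinomial]
  split_ifs with h
  · have hsum : ((∑ j, (slack v a d j).toNat : ℕ) : ℤ) = ∑ j, a j := by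
      rw [← sum_slack hsym d, Nat.cast_sum]
      exact sum_congr rfl fun j _ => Int.toNat_of_nonneg (h j)
    rw [qMultinomial, ← hsum, Int.toNat_natCast]
  · rfl

end RogersSzego

end

theorem stmt5_general (n r : ℕ) (hnr : n < r) (v : Fin r → Fin n → ℤ)
    (hv : ∀ i : Fin r, (i : ℕ) < n → ∀ j : Fin n, v i j = if (j : ℕ) = (i : ℕ) then 1 else 0)
    (hsym : ∀ j, ∑ i, v i j = 0)
    (a : Fin r → ℤ) (ha : ∀ i : Fin r, (i : ℕ) < n → a i = 0) (i : Fin n) :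
    jackson i (RSgen n r v a) =
      MvPolynomial.C ((1 - RatFunc.X ^ (∑ i, a i)) / (1 - RatFunc.X) : RatFunc ℚ) *
        RSgen n r v (fun jj => if (jj : ℕ) < n then 0 else a jj + v jj i) := by
  change _ = _ * RSgen n r v (lowerParam v a i)
  have hlower := lowerParam_of_lt (v := v) (a := a) i
  ext d
  have hi : slack v (lowerParam v a i) d (Fin.castLE hnr.le i) = d i :=
    slack_castLE hv hlower hnr d i
  rw [coeff_jackson, coeff_C_mul, coeff_RSgen hv ha hnr hsym, coeff_RSgen hv hlower hnr hsym,
    Finsupp.coe_add, Finsupp.single_eq_pi_single, slack_add_single_eq_slack_lowerParam hv ha hnr,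
    sum_eq_sum_lowerParam_add_one hv ha hnr hsym i, ← sum_slack hsym ⇑d,
    ← Int.toNat_natCast (d i), ← hi, div_eq_inv_mul, mul_assoc, mul_assoc,
    one_sub_X_pow_mul_intQMultinomial_add_single _ (hi ▸ Nat.cast_nonneg _)]

/-- Let `n < r`, `v_i = e_i` for `1 ≤ i ≤ n`, `v₁+⋯+v_r = 0`, and
`a ∈ ℤ^r` with `a_j = 0` for `j ≤ n`.  With `a⁽ⁱ⁾_j = a_j + (v_j)_i` for `j > n` and
`a⁽ⁱ⁾_j = 0` for `j ≤ n`, one has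
`(d/dx_i)_q RS_a(x;q) = [|a|]_q · RS_{a⁽ⁱ⁾}(x;q)` in `ℚ(q)[x₁,…,xₙ]`. -/
theorem stmt5 (n r : ℕ) (hn : 0 < n) (hnr : n < r) (v : Fin r → Fin n → ℤ)
    (hv : ∀ i : Fin r, (i : ℕ) < n → ∀ j : Fin n, v i j = if (j : ℕ) = (i : ℕ) then 1 else 0)
    (hsym : ∀ j, ∑ i, v i j = 0)
    (a : Fin r → ℤ) (ha : ∀ i : Fin r, (i : ℕ) < n → a i = 0) (i : Fin n) :
    jackson i (RSgen n r v a) =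
      MvPolynomial.C ((1 - RatFunc.X ^ (∑ i, a i)) / (1 - RatFunc.X) : RatFunc ℚ) *
        RSgen n r v (fun jj => if (jj : ℕ) < n then 0 else a jj + v jj i) :=
  stmt5_general n r hnr v hv hsym a ha i
end

section
/- Let n, r be positive integers, v₁,…,v_r ∈ ℤⁿ, and a₁,…,a_r ∈ ℤ such that P = {u ∈ ℝⁿ : ⟨u,v_i⟩ ≥ −a_i for all i} is a nonempty compact polytope whose vertices all lie in ℤⁿ. Set v_Δ = v₁+⋯+v_r, |a| = a₁+⋯+a_r, let c = max_{u∈P} ⟨u,v_Δ⟩ + |a| (a nonnegative integer), and let F = {u ∈ P : ⟨u,v_Δ⟩ + |a| = c}, so F∩ℤⁿ ≠ ∅. For u ∈ P∩ℤⁿ define g_u(q) = ∏_{i=1}^r 1/(q;q)_{⟨u,v_i⟩+a_i} for q ∈ (0,1), and M(u) = (⟨u,v_Δ⟩+|a|)! / ∏_{i=1}^r (⟨u,v_i⟩+a_i)!. Then for every u ∈ P∩ℤⁿ, the limit as q → 1⁻ of g_u(q) / Σ_{u'∈P∩ℤⁿ} g_{u'}(q) exists and equals M(u)/Σ_{u''∈F∩ℤⁿ}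 M(u'') if u ∈ F, and equals 0 if u ∉ F. -/
/-!
Since `(q;q)_d = (1 - q)^d [d]_q!` with `[d]_q! = ∏_{k<d} (1 + q + ⋯ + q^k) → d!` as `q → 1`,
the weight `g_w(q)` blows up like `(1 - q)^{-D(w)} / ∏_i d_i(w)!`, where `d_i(w) = ⟨w,v_i⟩ + a_i`
and `D(w) = ∑_i d_i(w) ≤ c`. After multiplying numerator and denominator by `(1 - q)^c`, only the
lattice points with `D(w) = c` survive at `q = 1`, each with weight `M(w) / c!`. The limit of the
denominator is nonzero because the linear part of `D` attains its maximum over the compact set `P`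
at an extreme point, which is a lattice point by hypothesis.
-/

open Filter Topology Finset Nat

def qFactorial (q : ℝ) (d : ℕ) : ℝ := ∏ k ∈ range d, ∑ j ∈ range (k + 1), q ^ j

lemma prod_one_sub_pow_succ_eq_mul_qFactorial (q : ℝ) (d : ℕ) :
    ∏ k ∈ range d, (1 - q ^ (k + 1)) = (1 - q) ^ d * qFactorial q d := by
  rw [qFactorial, ← card_range d, ← prod_const, card_range, ← prod_mul_distrib]
  refine prod_congr rfl fun k _ => ?_
  linear_combination geom_sum_mul q (k + 1)

lemma qFactorial_one (d : ℕ) : qFactorial 1 d = d ! := by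
  simp [qFactorial, ← prod_range_add_one_eq_factorial]

lemma continuous_qFactorial (d : ℕ) : Continuous fun q => qFactorial q d := by
  unfold qFactorial; fun_prop

section

variable {κ : Type*} [Fintype κ]

-- `(1 - q)^c ∏_i 1/(q;q)_{d_i}` with the pole at `q = 1` cancelled, valid when `∑ i, d i ≤ c`
-- (the exponent is a truncated subtraction).
noncomputable def qWeight (c : ℕ) (d : κ → ℕ) (q : ℝ) : ℝ :=
  (1 - q) ^ (c - ∑ i, d i) / ∏ i, qFactorial q (d i)

lemma one_sub_pow_mul_prod_inv_eq_qWeight {c : ℕ} {d : κ → ℕ} (hd : ∑ i, d i ≤ c) {q : ℝ}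
    (hq : q ≠ 1) :
    (1 - q) ^ c * ∏ i, (∏ k ∈ range (d i), (1 - q ^ (k + 1)))⁻¹ = qWeight c d q := by
  have h1q : (1 - q) ^ (∑ i, d i) ≠ 0 := pow_ne_zero _ (sub_ne_zero.2 hq.symm)
  simp_rw [qWeight, prod_one_sub_pow_succ_eq_mul_qFactorial, prod_inv_distrib, prod_mul_distrib,
    prod_pow_eq_pow_sum]
  rw [← Nat.sub_add_cancel hd, pow_add, mul_inv, Nat.add_sub_cancel]
  field_simp

lemma continuousAt_qWeight (c : ℕ) (d : κ → ℕ) : ContinuousAt (qWeight c d) 1 := by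
  refine ContinuousAt.div (by fun_prop) ?_ ?_
  · exact (continuous_finsetProd _ fun i _ => continuous_qFactorial (d i)).continuousAt
  · simp_rw [qFactorial_one]; positivity

lemma factorial_mul_qWeight_one {c : ℕ} {d : κ → ℕ} (hd : ∑ i, d i ≤ c) :
    (c ! : ℝ) * qWeight c d 1 = if ∑ i, d i = c then (multinomial univ d : ℝ) else 0 := by
  simp_rw [qWeight, qFactorial_one, sub_self]
  split_ifs with h
  · have hspec := Nat.multinomial_spec univ d
    rw [h] at hspec
    rw [h, Nat.sub_self, pow_zero, ← hspec]
    push_cast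
    field_simp
  · rw [zero_pow (Nat.sub_ne_zero_of_lt (lt_of_le_of_ne hd h)), zero_div, mul_zero]

end

theorem tendsto_prod_inv_div_sum_prod_inv {ι κ : Type*} [Fintype κ] (S : Finset ι)
    (d : ι → κ → ℕ) (c : ℕ) (hS : ∀ w ∈ S, ∑ i, d w i ≤ c) (hc : ∃ w ∈ S, ∑ i, d w i = c)
    {u : ι} (hu : ∑ i, d u i ≤ c) :
    Tendsto (fun q : ℝ => (∏ i, (∏ k ∈ range (d u i), (1 - q ^ (k + 1)))⁻¹) /
        ∑ w ∈ S, ∏ i, (∏ k ∈ range (d w i), (1 - q ^ (k + 1)))⁻¹) (𝓝[≠] 1)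
      (𝓝 (if ∑ i, d u i = c then
        (multinomial univ (d u) : ℝ) / ∑ w ∈ S with ∑ i, d w i = c, (multinomial univ (d w) : ℝ)
        else 0)) := by
  have hsum : (c ! : ℝ) * ∑ w ∈ S, qWeight c (d w) 1 =
      ∑ w ∈ S with ∑ i, d w i = c, (multinomial univ (d w) : ℝ) := by
    rw [mul_sum, sum_filter]
    exact sum_congr rfl fun w hw => factorial_mul_qWeight_one (hS w hw)
  have hpos : 0 < ∑ w ∈ S with ∑ i, d w i = c, (multinomial univ (d w) : ℝ) := by
    obtain ⟨z, hzS, hzc⟩ := hc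
    exact sum_pos (fun w _ => mod_cast multinomial_pos _ _) ⟨z, mem_filter.2 ⟨hzS, hzc⟩⟩
  have hc! : (c ! : ℝ) ≠ 0 := mod_cast c.factorial_ne_zero
  have hlim : Tendsto (fun q => qWeight c (d u) q / ∑ w ∈ S, qWeight c (d w) q) (𝓝[≠] 1)
      (𝓝 (qWeight c (d u) 1 / ∑ w ∈ S, qWeight c (d w) 1)) := by
    refine tendsto_nhdsWithin_of_tendsto_nhds ((continuousAt_qWeight c (d u)).tendsto.div
      (tendsto_finsetSum _ fun w _ => (continuousAt_qWeight c (d w)).tendsto) ?_)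
    rintro h
    rw [h, mul_zero] at hsum
    exact hpos.ne hsum
  rw [← mul_div_mul_left _ _ hc!, hsum, factorial_mul_qWeight_one hu, ite_div, zero_div] at hlim
  refine hlim.congr' ?_
  filter_upwards [self_mem_nhdsWithin] with q (hq : q ≠ 1)
  rw [← one_sub_pow_mul_prod_inv_eq_qWeight hu hq,
    sum_congr rfl fun w hw => (one_sub_pow_mul_prod_inv_eq_qWeight (hS w hw) hq).symm,
    ← mul_sum, mul_div_mul_left _ _ (pow_ne_zero c (sub_ne_zero.2 hq.symm))]

theorem IsCompact.exists_mem_extremePoints_isMaxOn {E : Type*} [AddCommGroup E] [Module ℝ E]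
    [TopologicalSpace E] [T2Space E] [IsTopologicalAddGroup E] [ContinuousSMul ℝ E]
    [LocallyConvexSpace ℝ E] {s : Set E} (hs : IsCompact s) (hne : s.Nonempty)
    (l : StrongDual ℝ E) : ∃ x ∈ s.extremePoints ℝ, IsMaxOn l s x := by
  have hexp : IsExposed ℝ s {x ∈ s | ∀ y ∈ s, l y ≤ l x} := fun _ => ⟨l, rfl⟩
  obtain ⟨x, hxs, hx⟩ := hs.exists_isMaxOn hne l.continuous.continuousOn
  obtain ⟨e, he⟩ := (hexp.isCompact hs).extremePoints_nonempty ⟨x, hxs, hx⟩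
  exact ⟨e, hexp.isExtreme.extremePoints_subset_extremePoints he, he.1.2⟩

lemma exists_int_isMaxOn_of_extremePoints_int {ι : Type*} {P : Set (ι → ℝ)} (hP : IsCompact P)
    (hne : P.Nonempty) (hvert : ∀ p ∈ P.extremePoints ℝ, ∀ j, ∃ z : ℤ, p j = z)
    (l : StrongDual ℝ (ι → ℝ)) :
    ∃ z : ι → ℤ, (fun j => (z j : ℝ)) ∈ P ∧ IsMaxOn l P (fun j => (z j : ℝ)) := by
  obtain ⟨e, he, hmax⟩ := hP.exists_mem_extremePoints_isMaxOn hne l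
  choose z hz using hvert e he
  obtain rfl : (fun j => (z j : ℝ)) = e := funext fun j => (hz j).symm
  exact ⟨z, he.1, hmax⟩

lemma exists_int_mem_sum_eq_of_isGreatest {n r : ℕ} (v : Fin r → Fin n → ℤ) (a : Fin r → ℤ)
    {P : Set (Fin n → ℝ)} (hP : IsCompact P)
    (hvert : ∀ p ∈ P.extremePoints ℝ, ∀ j, ∃ z : ℤ, p j = z) {c : ℝ}
    (hc : IsGreatest ((fun u : Fin n → ℝ => ∑ i, ((∑ j, u j * v i j) + a i)) '' P) c) :
    ∃ z : Fin n → ℤ, (fun j => (z j : ℝ)) ∈ P ∧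
      ∑ i, ((∑ j, (z j : ℝ) * v i j) + a i) = c := by
  let l : StrongDual ℝ (Fin n → ℝ) := ∑ i, ∑ j, (v i j : ℝ) • ContinuousLinearMap.proj j
  have hl : ∀ x : Fin n → ℝ, ∑ i, ((∑ j, x j * v i j) + a i) = l x + ∑ i, (a i : ℝ) := by
    intro x
    simp [l, sum_add_distrib, mul_comm]
  obtain ⟨p, hpP, hpc⟩ := hc.1
  obtain ⟨z, hzP, hzmax⟩ := exists_int_isMaxOn_of_extremePoints_int hP ⟨p, hpP⟩ hvert l
  refine ⟨z, hzP, le_antisymm (hc.2 ⟨_, hzP, rfl⟩) ?_⟩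
  rw [← hpc]
  simp only [hl]
  exact (add_le_add_iff_right _).2 (hzmax hpP)

theorem stmt8_general (n r : ℕ)
    (v : Fin r → Fin n → ℤ) (a : Fin r → ℤ)
    (P : Set (Fin n → ℝ))
    (hP : P = {u : Fin n → ℝ | ∀ i, -(a i : ℝ) ≤ ∑ j, u j * v i j})
    (hPcpt : IsCompact P)
    (hvert : ∀ p ∈ Set.extremePoints ℝ P, ∀ j, ∃ z : ℤ, p j = (z : ℝ))
    (c : ℕ)
    (hc : IsGreatest ((fun u : Fin n → ℝ => ∑ i, ((∑ j, u j * v i j) + a i)) '' P) (c : ℝ))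
    (S : Finset (Fin n → ℤ))
    (hS : ∀ u : Fin n → ℤ, u ∈ S ↔ (fun j => (u j : ℝ)) ∈ P)
    (u : Fin n → ℤ) (hu : (fun j => (u j : ℝ)) ∈ P) :
    Tendsto
      (fun q : ℝ =>
        (∏ i, (∏ k ∈ Finset.range ((∑ j, u j * v i j) + a i).toNat, (1 - q ^ (k + 1)))⁻¹) /
          ∑ u' ∈ S,
            ∏ i, (∏ k ∈ Finset.range ((∑ j, u' j * v i j) + a i).toNat, (1 - q ^ (k + 1)))⁻¹)
      (nhdsWithin 1 (Set.Ioo (0 : ℝ) 1))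
      (nhds
        (if (∑ i, ((∑ j, u j * v i j) + a i)) = (c : ℤ) then
          (Nat.multinomial Finset.univ (fun i => ((∑ j, u j * v i j) + a i).toNat) : ℝ) /
            ∑ u'' ∈ S.filter (fun u'' => (∑ i, ((∑ j, u'' j * v i j) + a i)) = (c : ℤ)),
              (Nat.multinomial Finset.univ (fun i => ((∑ j, u'' j * v i j) + a i).toNat) : ℝ)
        else 0)) := by
  let Φ : (Fin n → ℤ) → ℤ := fun w => ∑ i, ((∑ j, w j * v i j) + a i)
  let d : (Fin n → ℤ) → Fin r → ℕ := fun w i => ((∑ j, w j * v i j) + a i).toNat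
  have hΦ : ∀ w, (Φ w : ℝ) = ∑ i, ((∑ j, (w j : ℝ) * v i j) + a i) := fun w => by
    push_cast [Φ]; rfl
  have hd : ∀ w ∈ S, ((∑ i, d w i : ℕ) : ℤ) = Φ w := fun w hw => by
    push_cast
    refine sum_congr rfl fun i _ => Int.toNat_of_nonneg ?_
    have hwi := (hP ▸ (hS w).1 hw) i
    exact_mod_cast (by push_cast; linarith : (0 : ℝ) ≤ ((∑ j, w j * v i j) + a i : ℤ))
  have hiff : ∀ w ∈ S, Φ w = c ↔ ∑ i, d w i = c := fun w hw => by
    rw [← hd w hw]; exact_mod_cast Iff.rfl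
  have hle : ∀ w ∈ S, ∑ i, d w i ≤ c := fun w hw => by
    have : (Φ w : ℝ) ≤ c := (hΦ w).trans_le (hc.2 ⟨_, (hS w).1 hw, rfl⟩)
    exact_mod_cast (hd w hw).trans_le (mod_cast this)
  obtain ⟨z, hzP, hzc⟩ := exists_int_mem_sum_eq_of_isGreatest v a hPcpt hvert hc
  have hzS := (hS z).2 hzP
  have huS := (hS u).2 hu
  rw [if_congr (hiff u huS) rfl rfl, filter_congr hiff]
  exact (tendsto_prod_inv_div_sum_prod_inv S d c hle
    ⟨z, hzS, (hiff z hzS).1 (mod_cast (hΦ z).trans hzc)⟩ (hle u huS)).mono_left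
    (nhdsWithin_mono _ fun q hq => hq.2.ne)

/-- With `P`, `v_Δ`, `|a|`, `c`, `F` as in the context, set
`g_u(q) = ∏_i 1/(q;q)_{⟨u,v_i⟩+a_i}` for lattice points `u ∈ P∩ℤⁿ` (the finite set `S`)
and `M(u) = (⟨u,v_Δ⟩+|a|)!/∏_i (⟨u,v_i⟩+a_i)!`.  Then for every `u ∈ P∩ℤⁿ`, as `q → 1⁻`
the ratio `g_u(q)/Σ_{u'∈P∩ℤⁿ} g_{u'}(q)` tends to `M(u)/Σ_{u''∈F∩ℤⁿ} M(u'')` if `u ∈ F`,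
and to `0` otherwise. -/
theorem stmt8 (n r : ℕ) (hn : 0 < n) (hr : 0 < r)
    (v : Fin r → Fin n → ℤ) (a : Fin r → ℤ)
    (P : Set (Fin n → ℝ))
    (hP : P = {u : Fin n → ℝ | ∀ i, -(a i : ℝ) ≤ ∑ j, u j * v i j})
    (hPne : P.Nonempty) (hPcpt : IsCompact P)
    (hvert : ∀ p ∈ Set.extremePoints ℝ P, ∀ j, ∃ z : ℤ, p j = (z : ℝ))
    (c : ℕ)
    (hc : IsGreatest ((fun u : Fin n → ℝ => ∑ i, ((∑ j, u j * v i j) + a i)) '' P) (c : ℝ))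
    (S : Finset (Fin n → ℤ))
    (hS : ∀ u : Fin n → ℤ, u ∈ S ↔ (fun j => (u j : ℝ)) ∈ P)
    (u : Fin n → ℤ) (hu : (fun j => (u j : ℝ)) ∈ P) :
    Tendsto
      (fun q : ℝ =>
        (∏ i, (∏ k ∈ Finset.range ((∑ j, u j * v i j) + a i).toNat, (1 - q ^ (k + 1)))⁻¹) /
          ∑ u' ∈ S,
            ∏ i, (∏ k ∈ Finset.range ((∑ j, u' j * v i j) + a i).toNat, (1 - q ^ (k + 1)))⁻¹)
      (nhdsWithin 1 (Set.Ioo (0 : ℝ) 1))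
      (nhds
        (if (∑ i, ((∑ j, u j * v i j) + a i)) = (c : ℤ) then
          (Nat.multinomial Finset.univ (fun i => ((∑ j, u j * v i j) + a i).toNat) : ℝ) /
            ∑ u'' ∈ S.filter (fun u'' => (∑ i, ((∑ j, u'' j * v i j) + a i)) = (c : ℤ)),
              (Nat.multinomial Finset.univ (fun i => ((∑ j, u'' j * v i j) + a i).toNat) : ℝ)
        else 0)) :=
  stmt8_general n r v a P hP hPcpt hvert c hc S hS u hu
end

section
/- Let b be a nonnegative integer and q ∈ ℂ with |q| < 1. Then the family indexed by weakly increasing tuples 0 ≤ c₁ ≤ c₂ ≤ ⋯ ≤ c_b of nonnegative integers, with terms q^{c₁+c₂+⋯+c_b}, is (absolutely) summable, and its sum equals ∏_{k=1}^{b} 1/(1 − q^k) = 1/(q;q)_b. -/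
/-!
Splitting off the least entry `m = c₁` of a monotone `(n+1)`-tuple and subtracting it from the
other entries is a bijection onto `ℕ × {monotone n-tuples}`, under which
`q ^ (c₁ + ⋯ + c_{n+1}) = (q ^ (n+1)) ^ m * q ^ (c'₁ + ⋯ + c'_n)`. So the sum over monotone
`(n+1)`-tuples is the geometric series `∑ (q ^ (n+1)) ^ m = (1 - q ^ (n+1))⁻¹` times the sum over
monotone `n`-tuples, and the product formula follows by induction on `n`.
-/

open Finset

def monotoneFinSuccEquiv (n : ℕ) :
    {c : Fin (n + 1) → ℕ // Monotone c} ≃ ℕ × {c : Fin n → ℕ // Monotone c} where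
  toFun c := (c.1 0, ⟨fun j => c.1 j.succ - c.1 0,
    fun _ _ h => Nat.sub_le_sub_right (c.2 (Fin.succ_le_succ_iff.2 h)) _⟩)
  invFun p := ⟨Fin.cons p.1 fun j => p.1 + p.2.1 j, fun i j h => by
    cases i using Fin.cases <;> cases j using Fin.cases <;>
      simp_all [Fin.succ_le_succ_iff, p.2.2 _]⟩
  left_inv c := by
    ext j
    cases j using Fin.cases <;> simp [Nat.add_sub_cancel' (c.2 (Fin.zero_le _))]
  right_inv p := by ext <;> simp

theorem sum_monotoneFinSuccEquiv_symm {n : ℕ} (p : ℕ × {c : Fin n → ℕ // Monotone c}) :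
    ∑ j, ((monotoneFinSuccEquiv n).symm p).1 j = (n + 1) * p.1 + ∑ j, p.2.1 j := by
  simp only [monotoneFinSuccEquiv, Equiv.symm_mk, Equiv.coe_fn_mk, Fin.sum_cons, sum_add_distrib,
    sum_const, card_univ, Fintype.card_fin, smul_eq_mul]
  ring

theorem pow_sum_monotoneFinSuccEquiv_symm {M : Type*} [Monoid M] (q : M) {n : ℕ}
    (p : ℕ × {c : Fin n → ℕ // Monotone c}) :
    q ^ ∑ j, ((monotoneFinSuccEquiv n).symm p).1 j = (q ^ (n + 1)) ^ p.1 * q ^ ∑ j, p.2.1 j := by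
  rw [sum_monotoneFinSuccEquiv_symm, pow_add, pow_mul]

theorem norm_pow_succ_lt_one {R : Type*} [NormedRing R] {q : R} (hq : ‖q‖ < 1) (n : ℕ) :
    ‖q ^ (n + 1)‖ < 1 :=
  (norm_pow_le' q n.succ_pos).trans_lt (pow_lt_one₀ (norm_nonneg q) hq n.succ_ne_zero)

theorem summable_norm_pow_sum_monotone {R : Type*} [NormedRing R] {q : R} (hq : ‖q‖ < 1)
    (n : ℕ) : Summable fun c : {c : Fin n → ℕ // Monotone c} => ‖q ^ ∑ j, c.1 j‖ := by
  induction n with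
  | zero => exact .of_finite
  | succ n ih =>
    rw [← (monotoneFinSuccEquiv n).symm.summable_iff]
    simpa only [Function.comp_def, pow_sum_monotoneFinSuccEquiv_symm] using
      (summable_norm_geometric_of_norm_lt_one (norm_pow_succ_lt_one hq n)).mul_norm ih

theorem tsum_pow_sum_monotone {K : Type*} [NormedField K] [CompleteSpace K] {q : K}
    (hq : ‖q‖ < 1) (n : ℕ) :
    ∑' c : {c : Fin n → ℕ // Monotone c}, q ^ ∑ j, c.1 j = ∏ k ∈ range n, (1 - q ^ (k + 1))⁻¹ := by
  induction n with
  | zero => simp [Fintype.card_subtype, Subsingleton.monotone]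
  | succ n ih =>
    rw [← (monotoneFinSuccEquiv n).symm.tsum_eq]
    simp only [pow_sum_monotoneFinSuccEquiv_symm]
    rw [← tsum_mul_tsum_of_summable_norm
        (summable_norm_geometric_of_norm_lt_one (norm_pow_succ_lt_one hq n))
        (summable_norm_pow_sum_monotone hq n),
      tsum_geometric_of_norm_lt_one (norm_pow_succ_lt_one hq n), ih, prod_range_succ, mul_comm]

/-- Let `b` be a nonnegative integer and `q ∈ ℂ` with `|q| < 1`.
The family indexed by weakly increasing tuples `0 ≤ c₁ ≤ ⋯ ≤ c_b` of nonnegative integers,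
with terms `q^{c₁+⋯+c_b}`, is absolutely summable, and its sum equals
`∏_{k=1}^b 1/(1 − q^k) = 1/(q;q)_b`. -/
theorem stmt10 (b : ℕ) (q : ℂ) (hq : ‖q‖ < 1) :
    Summable (fun c : {c : Fin b → ℕ // Monotone c} => ‖q ^ (∑ j, (c : Fin b → ℕ) j)‖) ∧
      ∑' c : {c : Fin b → ℕ // Monotone c}, q ^ (∑ j, (c : Fin b → ℕ) j) =
        ∏ k ∈ Finset.range b, (1 - q ^ (k + 1))⁻¹ := by
  exact ⟨summable_norm_pow_sum_monotone hq b, tsum_pow_sum_monotone hq b⟩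
end
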